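/- Let B be a finite band, k a commutative ring, and suppose the graphs Γ_R(B,X) are all connected. Then the kernel J of the induced support map σ: kB → kΛ(B) satisfies kB·J = J, i.e., J is spanned by differences x − x' with σ(x) = σ(x') for which there exists y ∈ B with yx = x and yx' = x'. -/

import Mathlib

/-!
In a band, `B(ab)B = BaB ∩ BbB`, so `σ` is a semigroup map to `(Λ(B), ∩)` and `σ(bx) = σ(bx')` whenever
`σ(x) = σ(x')`; hence `J` is a left ideal. The kernel of the linear extension of any map is spanned
by differences of points in a common fibre, and connectivity of `Γ_R(B, X)` writes each such
difference as a telescoping sum of differences `u - v` with `yu = u`, `yv = v`; each of these is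
`y(u - v) ∈ kB·J`.
-/

/-- The principal two-sided ideal `BbB = {u*b*v}` in a semigroup. -/
def prinIdeal {B : Type*} [Semigroup B] (b : B) : Set B := {z | ∃ u v : B, z = u * b * v}

/-- The `k`-linear map `kB → kΛ(B)` induced by the support map `σ : b ↦ BbB` of a band. -/
noncomputable def suppAlgMap {B : Type*} [Semigroup B] (k : Type*) [CommRing k] :
    MonoidAlgebra k B →ₗ[k] MonoidAlgebra k (Set B) :=
  MonoidAlgebra.mapDomainLinearMap k k (prinIdeal (B := B))

open MonoidAlgebra Submodule

theorem Relation.ReflTransGen.sub_mem {α M S : Type*} [AddGroup M] [SetLike S M]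
    [AddSubgroupClass S M] {N : S} {r : α → α → Prop} {e : α → M}
    (h : ∀ u v, r u v → e u - e v ∈ N) {x y : α} (hxy : Relation.ReflTransGen r x y) :
    e x - e y ∈ N := by
  induction hxy with
  | refl => simp
  | tail _ huv ih => simpa using add_mem ih (h _ _ huv)

section FibreDifferences

variable {α β k : Type*}

theorem MonoidAlgebra.ker_mapDomainLinearMap [Ring k] (f : α → β) :
    LinearMap.ker (mapDomainLinearMap k k f) =
      span k {g | ∃ x x', f x = f x' ∧ g = single x (1 : k) - single x' 1} := by
  classical
  set N := span k {g | ∃ x x', f x = f x' ∧ g = single x (1 : k) - single x' 1}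
  refine le_antisymm (fun g hg => ?_) (span_le.mpr ?_)
  · rcases isEmpty_or_nonempty α with hα | hα
    · obtain rfl : g = 0 := by ext a; exact isEmptyElim a
      exact zero_mem _
    -- `g - s g ∈ N` for every `g`, and `s g = 0` on the kernel since `s` factors through `f`.
    set s := Function.invFun f ∘ f
    have hs : ∀ x, f (s x) = f x := fun x => Function.invFun_eq ⟨x, rfl⟩
    have h_proj : mapDomainLinearMap k k s g = 0 := by
      rw [mapDomainLinearMap_comp, LinearMap.comp_apply, LinearMap.mem_ker.mp hg, map_zero]
    have h_diff : ∀ g' : MonoidAlgebra k α, g' - mapDomainLinearMap k k s g' ∈ N := by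
      intro g'
      induction g' using MonoidAlgebra.induction_linear with
      | zero => simp
      | add p q hp hq => simpa [add_sub_add_comm] using add_mem hp hq
      | single x c =>
        have h_smul : single x c - single (s x) c = c • (single x (1 : k) - single (s x) 1) := by
          rw [smul_sub, smul_single', smul_single', mul_one]
        rw [mapDomainLinearMap_single, h_smul]
        exact smul_mem _ c (subset_span ⟨x, s x, (hs x).symm, rfl⟩)
    simpa [h_proj] using h_diff g
  · rintro _ ⟨x, x', hxx', rfl⟩
    simp [hxx']

theorem MonoidAlgebra.mapDomainLinearMap_mul_single_one [Semiring k] [Mul α] (f : α → β)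
    (a : MonoidAlgebra k α) (x : α) :
    mapDomainLinearMap k k f (a * single x 1) = mapDomainLinearMap k k (fun b => f (b * x)) a := by
  induction a using MonoidAlgebra.induction_linear with
  | zero => simp
  | add p q hp hq => rw [add_mul, map_add, map_add, hp, hq]
  | single b c => simp

end FibreDifferences

section Band

variable {B : Type*} [Semigroup B]

theorem prinIdeal_mul (hband : ∀ x : B, x * x = x) (a b : B) :
    prinIdeal (a * b) = prinIdeal a ∩ prinIdeal b := by
  ext z
  constructor
  · rintro ⟨u, v, rfl⟩
    exact ⟨⟨u, b * v, by simp only [mul_assoc]⟩, ⟨u * a, v, by simp only [mul_assoc]⟩⟩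
  · rintro ⟨⟨s, t, rfl⟩, ⟨p, q, hz⟩⟩
    set w := a * (t * p) * b
    have hz_w : s * a * t = s * w * q := by
      calc s * a * t = (s * a * t) * (p * b * q) := by rw [← hz, hband]
        _ = s * w * q := by simp only [w, mul_assoc]
    have hw : w * (a * b) * w = w := by
      calc w * (a * b) * w = a * (t * p) * ((b * a) * (b * a)) * (t * p) * b := by
            simp only [w, mul_assoc]
        _ = a * (t * p) * (b * a) * (t * p) * b := by rw [hband]
        _ = w * w := by simp only [w, mul_assoc]
        _ = w := hband w
    exact ⟨s * w, w * q, by rw [hz_w]; nth_rewrite 1 [← hw]; simp only [mul_assoc]⟩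

theorem prinIdeal_mul_left_congr (hband : ∀ x : B, x * x = x) {x x' : B}
    (h : prinIdeal x = prinIdeal x') (b : B) : prinIdeal (b * x) = prinIdeal (b * x') := by
  rw [prinIdeal_mul hband, prinIdeal_mul hband, h]

variable {k : Type*} [CommRing k]

theorem ker_suppAlgMap :
    LinearMap.ker (suppAlgMap (B := B) k) = span k
      {g | ∃ x x', prinIdeal x = prinIdeal x' ∧ g = single x (1 : k) - single x' 1} :=
  ker_mapDomainLinearMap _

theorem suppAlgMap_mul_eq_zero (hband : ∀ x : B, x * x = x) {j : MonoidAlgebra k B}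
    (hj : suppAlgMap k j = 0) (a : MonoidAlgebra k B) : suppAlgMap k (a * j) = 0 := by
  have hj_span : j ∈ LinearMap.ker (suppAlgMap k) := hj
  rw [ker_suppAlgMap] at hj_span
  clear hj
  induction hj_span using span_induction with
  | mem g hg =>
    obtain ⟨x, x', hxx', rfl⟩ := hg
    simp only [suppAlgMap, mul_sub, map_sub, mapDomainLinearMap_mul_single_one,
      prinIdeal_mul_left_congr hband hxx', sub_self]
  | zero => simp
  | add p q _ _ hp hq => rw [mul_add, map_add, hp, hq, add_zero]
  | smul c p _ hp => rw [mul_smul_comm, map_smul, hp, smul_zero]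

theorem ker_suppAlgMap_eq_span_of_reflTransGen
    (hconn : ∀ x x' : B, prinIdeal x = prinIdeal x' →
      Relation.ReflTransGen
        (fun u v => prinIdeal u = prinIdeal v ∧ ∃ y : B, y * u = u ∧ y * v = v) x x') :
    LinearMap.ker (suppAlgMap (B := B) k) = span k {f : MonoidAlgebra k B |
      ∃ x x' y : B, prinIdeal x = prinIdeal x' ∧ y * x = x ∧ y * x' = x' ∧
        f = single x 1 - single x' 1} := by
  rw [ker_suppAlgMap]
  refine le_antisymm (span_le.mpr ?_) (span_mono ?_)
  · rintro _ ⟨x, x', hxx', rfl⟩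
    exact (hconn x x' hxx').sub_mem (e := fun b => single b (1 : k))
      fun u v ⟨huv, y, hu, hv⟩ => subset_span ⟨u, v, y, huv, hu, hv, rfl⟩
  · rintro _ ⟨x, x', -, hxx', -, -, rfl⟩
    exact ⟨x, x', hxx', rfl⟩

end Band

theorem band_GammaR_connected_kernel_span_general {B : Type*} [Semigroup B]
    (hband : ∀ x : B, x * x = x) (k : Type*) [CommRing k]
    (hconn : ∀ x x' : B, prinIdeal x = prinIdeal x' →
      Relation.ReflTransGen
        (fun u v => prinIdeal u = prinIdeal v ∧ ∃ y : B, y * u = u ∧ y * v = v) x x') :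
    LinearMap.ker (suppAlgMap (B := B) k) =
      Submodule.span k {f : MonoidAlgebra k B | ∃ x x' y : B,
        prinIdeal x = prinIdeal x' ∧ y * x = x ∧ y * x' = x' ∧
        f = MonoidAlgebra.single x 1 - MonoidAlgebra.single x' 1} ∧
    ∀ f : MonoidAlgebra k B, suppAlgMap k f = 0 ↔
      f ∈ AddSubgroup.closure {z : MonoidAlgebra k B |
        ∃ (a j : MonoidAlgebra k B), suppAlgMap k j = 0 ∧ z = a * j} := by
  have h_ker := ker_suppAlgMap_eq_span_of_reflTransGen hconn (k := k)
  refine ⟨h_ker, fun f => ⟨fun hf => ?_, fun hf => ?_⟩⟩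
  · have hf_span : f ∈ (span k _).toAddSubmonoid := h_ker ▸ LinearMap.mem_ker.mpr hf
    rw [span_eq_closure] at hf_span
    refine (AddSubmonoid.closure_le (S := (AddSubgroup.closure _).toAddSubmonoid)).mpr ?_ hf_span
    rintro _ ⟨c, -, _, ⟨x, x', y, hxx', hx, hx', rfl⟩, rfl⟩
    refine AddSubgroup.subset_closure ⟨single y c, single x 1 - single x' 1, ?_, ?_⟩
    · simp [suppAlgMap, hxx']
    · change c • _ = _
      rw [mul_sub, single_mul_single, single_mul_single, hx, hx', mul_one, smul_sub,
        smul_single', smul_single', mul_one]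
  · refine (AddSubgroup.closure_le (K := (LinearMap.ker (suppAlgMap k)).toAddSubgroup)).mpr
      ?_ hf
    rintro _ ⟨a, j, hj, rfl⟩
    exact suppAlgMap_mul_eq_zero hband hj a

/-- If all the graphs `Γ_R(B,X)` of a finite band are connected, then the kernel `J` of the
induced support map `σ : kB → kΛ(B)` satisfies `kB·J = J`; that is, `J` is spanned by the
differences `x - x'` with `σ(x) = σ(x')` admitting `y` with `yx = x` and `yx' = x'`. -/
theorem band_GammaR_connected_kernel_span {B : Type*} [Semigroup B] [Fintype B]
    (hband : ∀ x : B, x * x = x) (k : Type*) [CommRing k]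
    (hconn : ∀ x x' : B, prinIdeal x = prinIdeal x' →
      Relation.ReflTransGen
        (fun u v => prinIdeal u = prinIdeal v ∧ ∃ y : B, y * u = u ∧ y * v = v) x x') :
    LinearMap.ker (suppAlgMap (B := B) k) =
      Submodule.span k {f : MonoidAlgebra k B | ∃ x x' y : B,
        prinIdeal x = prinIdeal x' ∧ y * x = x ∧ y * x' = x' ∧
        f = MonoidAlgebra.single x 1 - MonoidAlgebra.single x' 1} ∧
    ∀ f : MonoidAlgebra k B, suppAlgMap k f = 0 ↔
      f ∈ AddSubgroup.closure {z : MonoidAlgebra k B |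
        ∃ (a j : MonoidAlgebra k B), suppAlgMap k j = 0 ∧ z = a * j} :=
  band_GammaR_connected_kernel_span_general hband k hconn
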